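/- arXiv:2312.17022 — 5 statements merged into one kernel-verified Lean document; each statement's English description precedes it below -/
import Mathlib

section
/- (Kelly's Lemma) If G and H are graphs on n vertices with a common deck (i.e., there is a bijection σ : V(G) → V(H) with G − v ≅ H − σ(v) for all v), then for every graph F with fewer than n vertices, s(F, G) = s(F, H). -/
/-! Double count the pairs `(v, K)` with `K` a copy of `F` in `G` and `v ∉ K`. The copies of `F`
avoiding `v` are exactly the copies of `F` in the card `G - v`, and each copy avoids exactly
`n - |F|` vertices, so `∑ v, s(F, G - v) = (n - |F|) · s(F, G)`. The left side only depends on the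
deck, and `n - |F| > 0`. -/

open SimpleGraph Finset

/-- `s(F,G)`: the number of subgraphs of `G` isomorphic to `F`. -/
noncomputable def subCount {W V : Type*} (F : SimpleGraph W) (G : SimpleGraph V) : ℕ :=
  Nat.card {H : G.Subgraph // Nonempty (H.coe ≃g F)}

/-- `i(F,G)`: the number of induced subgraphs of `G` isomorphic to `F`. -/
noncomputable def indCount {W V : Type*} (F : SimpleGraph W) (G : SimpleGraph V) : ℕ :=
  Nat.card {H : G.Subgraph // H.IsInduced ∧ Nonempty (H.coe ≃g F)}

/-- `s(F,G^v)`: subgraphs of `G` isomorphic to `F` that contain `v`. -/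
noncomputable def subCountAt {W V : Type*} (F : SimpleGraph W) (G : SimpleGraph V) (v : V) : ℕ :=
  Nat.card {H : G.Subgraph // v ∈ H.verts ∧ Nonempty (H.coe ≃g F)}

/-- `i(F,G^v)`: induced subgraphs of `G` isomorphic to `F` that contain `v`. -/
noncomputable def indCountAt {W V : Type*} (F : SimpleGraph W) (G : SimpleGraph V) (v : V) : ℕ :=
  Nat.card {H : G.Subgraph // H.IsInduced ∧ v ∈ H.verts ∧ Nonempty (H.coe ≃g F)}

/-- `s(F^x,G^v)`: subgraphs `H` of `G` containing `v` with a rooted isomorphism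
`H^v ≅ F^x` (an isomorphism `H ≃g F` sending `v` to `x`). -/
noncomputable def rootedCountAt {W V : Type*} (F : SimpleGraph W) (x : W)
    (G : SimpleGraph V) (v : V) : ℕ :=
  Nat.card {H : G.Subgraph // ∃ hv : v ∈ H.verts, ∃ e : H.coe ≃g F, e ⟨v, hv⟩ = x}

/-- `i(F^x,G^v)`: induced subgraphs `H` of `G` containing `v` with `H^v ≅ F^x`. -/
noncomputable def indRootedCountAt {W V : Type*} (F : SimpleGraph W) (x : W)
    (G : SimpleGraph V) (v : V) : ℕ :=
  Nat.card {H : G.Subgraph //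
    H.IsInduced ∧ ∃ hv : v ∈ H.verts, ∃ e : H.coe ≃g F, e ⟨v, hv⟩ = x}

/-- `s(F^x,G)`: rooted-subgraph occurrences of `F^x` in `G`, root anywhere:
pairs `(H, w)` with `H` a subgraph of `G`, `w ∈ V(H)` and `H^w ≅ F^x`. -/
noncomputable def rootedCount {W V : Type*} (F : SimpleGraph W) (x : W)
    (G : SimpleGraph V) : ℕ :=
  Nat.card {p : G.Subgraph × V //
    ∃ hv : p.2 ∈ p.1.verts, ∃ e : p.1.coe ≃g F, e ⟨p.2, hv⟩ = x}

/-- The vertex-deleted subgraph `G - v`. -/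
def deleteVert {V : Type*} (G : SimpleGraph V) (v : V) :
    SimpleGraph {w : V // w ∈ ({w | w ≠ v} : Set V)} :=
  G.induce {w | w ≠ v}

/-- The radius of `G`, valued in `ℕ∞` (infinite if `G` is disconnected). -/
noncomputable def eradius {V : Type*} (G : SimpleGraph V) : ℕ∞ :=
  ⨅ v, ⨆ w, G.edist v w

/-- Isomorphism of rooted graphs. -/
def RootedIso {α β : Type*} (A : SimpleGraph α) (a : α) (B : SimpleGraph β) (b : β) : Prop :=
  ∃ e : A ≃g B, e a = b

namespace SimpleGraph.Subgraph

variable {α β : Type*} {A : SimpleGraph α} {B : SimpleGraph β}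

lemma comap_map_of_injective {f : A →g B} (hf : Function.Injective f) (H : A.Subgraph) :
    (H.map f).comap f = H := by
  ext u v
  · simp [hf.eq_iff]
  · simp only [comap_adj, map_adj, Relation.map_apply, hf.eq_iff, exists_eq_right_right,
      exists_eq_right, and_iff_right_iff_imp]
    exact H.adj_sub

lemma map_comap_of_verts_subset_range (f : A ↪g B) {H : B.Subgraph}
    (hH : H.verts ⊆ Set.range f) : (H.comap f.toHom).map f.toHom = H := by
  ext x y
  · simp only [map_verts, comap_verts, Set.mem_image, Set.mem_preimage]
    exact ⟨by rintro ⟨a, ha, rfl⟩; exact ha, fun hx => by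
      obtain ⟨a, rfl⟩ := hH hx; exact ⟨a, hx, rfl⟩⟩
  · simp only [map_adj, comap_adj, Relation.map_apply]
    refine ⟨by rintro ⟨a, b, ⟨-, h⟩, rfl, rfl⟩; exact h, fun h => ?_⟩
    obtain ⟨a, rfl⟩ := hH (H.edge_vert h)
    obtain ⟨b, rfl⟩ := hH (H.edge_vert h.symm)
    exact ⟨a, b, ⟨f.map_adj_iff.1 (H.adj_sub h), h⟩, rfl, rfl⟩

noncomputable def mapEquivOfEmbedding (f : A ↪g B) :
    A.Subgraph ≃ {H : B.Subgraph // H.verts ⊆ Set.range f} where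
  toFun H := ⟨H.map f.toHom, by rintro _ ⟨a, -, rfl⟩; exact ⟨a, rfl⟩⟩
  invFun H := H.1.comap f.toHom
  left_inv H := comap_map_of_injective f.injective H
  right_inv H := Subtype.ext (map_comap_of_verts_subset_range f H.2)

end SimpleGraph.Subgraph

section SubgraphCount

variable {α β γ : Type*} {A : SimpleGraph α} {B : SimpleGraph β}

lemma nonempty_iso_congr_left {C : SimpleGraph γ} (e : A ≃g B) :
    Nonempty (A ≃g C) ↔ Nonempty (B ≃g C) :=
  ⟨fun ⟨i⟩ => ⟨i.comp e.symm⟩, fun ⟨i⟩ => ⟨i.comp e⟩⟩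

lemma subCount_eq_card_of_embedding (F : SimpleGraph γ) (f : A ↪g B) :
    subCount F A =
      Nat.card {H : B.Subgraph // H.verts ⊆ Set.range f ∧ Nonempty (H.coe ≃g F)} :=
  Nat.card_congr <|
    ((Subgraph.mapEquivOfEmbedding f).subtypeEquiv fun H =>
        nonempty_iso_congr_left (Copy.isoSubgraphMap f.toCopy H)).trans
      (Equiv.subtypeSubtypeEquivSubtypeInter (fun H : B.Subgraph => H.verts ⊆ Set.range f)
        fun H => Nonempty (H.coe ≃g F))

lemma subCount_congr (F : SimpleGraph γ) (e : A ≃g B) : subCount F A = subCount F B := by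
  rw [subCount_eq_card_of_embedding F e.toEmbedding, subCount]
  simp [Set.range_eq_univ.2 e.surjective]

end SubgraphCount

lemma subCount_deleteVert {V W : Type*} (F : SimpleGraph W) (G : SimpleGraph V) (v : V) :
    subCount F (deleteVert G v) =
      Nat.card {H : G.Subgraph // v ∉ H.verts ∧ Nonempty (H.coe ≃g F)} := by
  rw [deleteVert, subCount_eq_card_of_embedding F (Embedding.induce {w | w ≠ v})]
  have hrange : Set.range (Embedding.induce (G := G) {w | w ≠ v}) = {v}ᶜ := Subtype.range_coe
  simp only [hrange, Set.subset_compl_singleton_iff]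

lemma card_compl_verts_of_iso {V W : Type*} [Finite V] {G : SimpleGraph V} {F : SimpleGraph W}
    {H : G.Subgraph} (e : H.coe ≃g F) : Nat.card ↥H.vertsᶜ = Nat.card V - Nat.card W := by
  rw [Nat.card_coe_set_eq, Set.ncard_compl, ← Nat.card_coe_set_eq,
    Nat.card_congr e.toEquiv]

theorem sum_subCount_deleteVert {V W : Type*} [Fintype V] [Fintype W] (G : SimpleGraph V)
    (F : SimpleGraph W) :
    ∑ v, subCount F (deleteVert G v) = (Fintype.card V - Fintype.card W) * subCount F G := by
  let Copies := {H : G.Subgraph // Nonempty (H.coe ≃g F)}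
  have : Fintype Copies := Fintype.ofFinite _
  let pairs : (Σ v, {H : G.Subgraph // v ∉ H.verts ∧ Nonempty (H.coe ≃g F)}) ≃
      Σ H : Copies, ↥H.1.vertsᶜ :=
    { toFun p := ⟨⟨p.2.1, p.2.2.2⟩, p.1, p.2.2.1⟩
      invFun q := ⟨q.2.1, q.1.1, q.2.2, q.1.2⟩ }
  calc ∑ v, subCount F (deleteVert G v)
      = Nat.card (Σ v, {H : G.Subgraph // v ∉ H.verts ∧ Nonempty (H.coe ≃g F)}) := by
        simp only [subCount_deleteVert, Nat.card_sigma]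
    _ = ∑ H : Copies, Nat.card ↥H.1.vertsᶜ := by rw [Nat.card_congr pairs, Nat.card_sigma]
    _ = ∑ _H : Copies, (Fintype.card V - Fintype.card W) := by
        refine Finset.sum_congr rfl fun H _ => ?_
        rw [card_compl_verts_of_iso H.2.some, Nat.card_eq_fintype_card, Nat.card_eq_fintype_card]
    _ = (Fintype.card V - Fintype.card W) * subCount F G := by
        rw [Finset.sum_const, smul_eq_mul, Finset.card_univ, mul_comm, subCount,
          Nat.card_eq_fintype_card]

/-- Kelly's Lemma: if `G` and `H` have a common deck via a
bijection `σ`, then `s(F, G) = s(F, H)` for every `F` with fewer vertices. -/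
theorem stmt5 {V V' W : Type*} [Fintype V] [Fintype V'] [Fintype W]
    (G : SimpleGraph V) (H : SimpleGraph V') (sigma : V ≃ V')
    (hdeck : ∀ v : V, Nonempty (deleteVert G v ≃g deleteVert H (sigma v)))
    (F : SimpleGraph W) (hF : Fintype.card W < Fintype.card V) :
    subCount F G = subCount F H := by
  have hdecks : ∑ v, subCount F (deleteVert G v) = ∑ v', subCount F (deleteVert H v') :=
    Fintype.sum_equiv sigma _ _ fun v => subCount_congr F (hdeck v).some
  rw [sum_subCount_deleteVert, sum_subCount_deleteVert, ← Fintype.card_congr sigma] at hdecks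
  exact Nat.eq_of_mul_eq_mul_left (Nat.sub_pos_of_lt hF) hdecks
end

section
/- (Kelly's Lemma, induced version) If G and H are graphs on n vertices with a common deck, then for every graph F with fewer than n vertices, i(F, G) = i(F, H). -/
open SimpleGraph Finset

/-!
Kelly's double count. An induced copy of `F` in `G` on `k` vertices survives in `G - v` exactly
when `v` is one of the `n - k` vertices it misses, so `∑ᵥ i(F, G - v) = (n - k) · i(F, G)`. The
left side only depends on the deck, and `n - k > 0` when `k < n`.
-/

section

variable {α β V W : Type*}

theorem Set.sum_card_setOf_notMem [Fintype α] (𝒜 : Set (Set α)) (k : ℕ)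
    (hk : ∀ S ∈ 𝒜, Nat.card S = k) :
    ∑ a, Nat.card ↥{S ∈ 𝒜 | a ∉ S} = (Nat.card α - k) * Nat.card 𝒜 := by
  classical
  let e : (Σ a, ↥{S ∈ 𝒜 | a ∉ S}) ≃ Σ S : 𝒜, ↥(S.1ᶜ) :=
    { toFun p := ⟨⟨p.2.1, p.2.2.1⟩, p.1, p.2.2.2⟩
      invFun p := ⟨p.2.1, p.1.1, p.1.2, p.2.2⟩
      left_inv _ := rfl
      right_inv _ := rfl }
  have hcompl (S : 𝒜) : Nat.card ↥(S.1ᶜ) = Nat.card α - k := by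
    rw [Nat.card_coe_set_eq, Set.ncard_compl, ← Nat.card_coe_set_eq, hk S S.2]
  rw [← Nat.card_sigma, Nat.card_congr e, Nat.card_sigma]
  simp only [hcompl, sum_const, card_univ, smul_eq_mul, Nat.card_eq_fintype_card]
  ring

namespace SimpleGraph

theorem Subgraph.IsInduced.coe_eq_induce {G : SimpleGraph V} {H : G.Subgraph} (h : H.IsInduced) :
    H.coe = G.induce H.verts := by
  ext
  exact h.adj

def inducingSets (F : SimpleGraph W) (G : SimpleGraph V) : Set (Set V) :=
  {S | Nonempty (G.induce S ≃g F)}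

theorem indCount_eq_card_inducingSets (F : SimpleGraph W) (G : SimpleGraph V) :
    indCount F G = Nat.card (inducingSets F G) :=
  Nat.card_congr
    { toFun H := ⟨H.1.verts, (H.2.1.coe_eq_induce ▸ H.2.2 : Nonempty (G.induce _ ≃g F))⟩
      invFun S := ⟨(⊤ : G.Subgraph).induce S, fun _ hu _ hv hadj => ⟨hu, hv, hadj⟩,
        induce_eq_coe_induce_top (G := G) S.1 ▸ S.2⟩
      left_inv H := Subtype.ext H.2.1.induce_top_verts
      right_inv _ := rfl }

namespace Embedding

variable {A : SimpleGraph α} {B : SimpleGraph β}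

noncomputable def induceImageIso (f : A ↪g B) (S : Set α) : A.induce S ≃g B.induce (f '' S) where
  toEquiv := Equiv.Set.image f S f.injective
  map_rel_iff' := by simp

theorem image_mem_inducingSets_iff (F : SimpleGraph W) (f : A ↪g B) (S : Set α) :
    f '' S ∈ inducingSets F B ↔ S ∈ inducingSets F A :=
  ⟨Nonempty.map fun e => e.comp (f.induceImageIso S),
    Nonempty.map fun e => e.comp (f.induceImageIso S).symm⟩

theorem card_inducingSets (F : SimpleGraph W) (f : A ↪g B) :
    Nat.card (inducingSets F A) = Nat.card ↥{T ∈ inducingSets F B | T ⊆ Set.range f} :=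
  Nat.card_congr
    { toFun S := ⟨f '' S.1, (f.image_mem_inducingSets_iff F S).2 S.2, Set.image_subset_range _ _⟩
      invFun T := ⟨f ⁻¹' T.1, (f.image_mem_inducingSets_iff F _).1 <| by
        rw [Set.image_preimage_eq_of_subset T.2.2]
        exact T.2.1⟩
      left_inv S := Subtype.ext (Set.preimage_image_eq _ f.injective)
      right_inv T := Subtype.ext (Set.image_preimage_eq_of_subset T.2.2) }

end Embedding

theorem Iso.indCount_eq {A : SimpleGraph α} {B : SimpleGraph β} (F : SimpleGraph W)
    (e : A ≃g B) : indCount F A = indCount F B := by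
  rw [indCount_eq_card_inducingSets, indCount_eq_card_inducingSets,
    e.toEmbedding.card_inducingSets F]
  simp [e.surjective.range_eq]

theorem indCount_deleteVert (F : SimpleGraph W) (G : SimpleGraph V) (v : V) :
    indCount F (deleteVert G v) = Nat.card ↥{S ∈ inducingSets F G | v ∉ S} := by
  have hrange : Set.range (Embedding.induce (G := G) {w | w ≠ v}) = {v}ᶜ := Subtype.range_coe
  rw [indCount_eq_card_inducingSets, deleteVert, (Embedding.induce _).card_inducingSets F, hrange]
  simp only [Set.subset_compl_singleton_iff]

theorem sum_indCount_deleteVert [Fintype V] (F : SimpleGraph W) (G : SimpleGraph V) :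
    ∑ v, indCount F (deleteVert G v) = (Nat.card V - Nat.card W) * indCount F G := by
  simp only [indCount_deleteVert]
  rw [indCount_eq_card_inducingSets]
  exact Set.sum_card_setOf_notMem _ _ fun S hS => hS.elim fun e => Nat.card_congr e.toEquiv

end SimpleGraph

end

/-- Kelly's Lemma, induced version. -/
theorem stmt6 {V V' W : Type*} [Fintype V] [Fintype V'] [Fintype W]
    (G : SimpleGraph V) (H : SimpleGraph V') (sigma : V ≃ V')
    (hdeck : ∀ v : V, Nonempty (deleteVert G v ≃g deleteVert H (sigma v)))
    (F : SimpleGraph W) (hF : Fintype.card W < Fintype.card V) :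
    indCount F G = indCount F H := by
  have hsum : ∑ v, indCount F (deleteVert G v) = ∑ v, indCount F (deleteVert H (sigma v)) :=
    sum_congr rfl fun v _ => (hdeck v).elim (Iso.indCount_eq F)
  rw [Equiv.sum_comp sigma fun v' => indCount F (deleteVert H v'), sum_indCount_deleteVert,
    sum_indCount_deleteVert, Nat.card_congr sigma] at hsum
  refine Nat.eq_of_mul_eq_mul_left (Nat.sub_pos_of_lt ?_) hsum
  simpa only [Nat.card_eq_fintype_card, Fintype.card_congr sigma] using hF
end

section
/- (Kelly's Lemma, edge version) If G and H are graphs and there is a bijection τ : E(G) → E(H) with G − e ≅ H − τ(e) for all edges e, then for every graph F with e(F) < e(G), s(F, G) = s(F, H). -/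
open SimpleGraph Finset

/-! Double count the pairs `(e, K)` with `K` a copy of `F` in `G` and `e` an edge of `G`
not in `K`: for fixed `e` they are the copies of `F` in `G - e`, and each `K` misses exactly
`e(G) - e(F)` edges, so `∑ₑ s(F, G - e) = (e(G) - e(F)) · s(F, G)`. The edge deck makes the
left side the same for `G` and `H`, and `e(G) = e(H)`; since `e(F) < e(G)` the factor is
nonzero and can be cancelled. -/

namespace SimpleGraph

variable {α β γ : Type*} {G : SimpleGraph α} {G' : SimpleGraph β} {F : SimpleGraph γ}

abbrev IsoSubgraphs (F : SimpleGraph γ) (G : SimpleGraph α) : Type _ :=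
  {K : G.Subgraph // Nonempty (K.coe ≃g F)}

def Iso.mapSubgraph (φ : G ≃g G') : G.Subgraph ≃ G'.Subgraph where
  toFun := Subgraph.map φ.toHom
  invFun := Subgraph.map φ.symm.toHom
  left_inv K := by ext <;> simp [Subgraph.map]
  right_inv K := by ext <;> simp [Subgraph.map]

lemma subCount_congr_right (φ : G ≃g G') (F : SimpleGraph γ) : subCount F G = subCount F G' :=
  Nat.card_congr <| φ.mapSubgraph.subtypeEquiv fun K =>
    ⟨fun ⟨e⟩ => ⟨(φ.toCopy.isoSubgraphMap K).symm.trans e⟩,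
      fun ⟨e⟩ => ⟨(φ.toCopy.isoSubgraphMap K).trans e⟩⟩

def Subgraph.deleteEdgesEquiv (G : SimpleGraph α) (s : Set (Sym2 α)) :
    (G.deleteEdges s).Subgraph ≃ {K : G.Subgraph // Disjoint K.edgeSet s} where
  toFun K :=
    ⟨⟨K.verts, K.Adj, fun h => (SimpleGraph.deleteEdges_adj.mp (K.adj_sub h)).1, K.edge_vert,
        K.symm⟩,
      Set.disjoint_left.mpr fun e he => by
        induction e using Sym2.ind with
        | h a b => exact (SimpleGraph.deleteEdges_adj.mp (K.adj_sub he)).2⟩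
  invFun K := ⟨K.1.verts, K.1.Adj,
    fun h => SimpleGraph.deleteEdges_adj.mpr
      ⟨K.1.adj_sub h, Set.disjoint_left.mp K.2 (Subgraph.mem_edgeSet.mpr h)⟩,
    K.1.edge_vert, K.1.symm⟩
  left_inv _ := rfl
  right_inv _ := rfl

lemma subCount_deleteEdges (s : Set (Sym2 α)) :
    subCount F (G.deleteEdges s) = Nat.card {K : IsoSubgraphs F G // Disjoint K.1.edgeSet s} :=
  Nat.card_congr
    { toFun K :=
        ⟨⟨(Subgraph.deleteEdgesEquiv G s K.1).1, K.2⟩,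
          (Subgraph.deleteEdgesEquiv G s K.1).2⟩
      invFun K := ⟨(Subgraph.deleteEdgesEquiv G s).symm ⟨K.1.1, K.2⟩, K.1.2⟩
      left_inv _ := rfl
      right_inv _ := rfl }

lemma Subgraph.card_edgeSet_coe (K : G.Subgraph) :
    Nat.card K.coe.edgeSet = Nat.card K.edgeSet := by
  rw [← K.image_coe_edgeSet_coe,
    Nat.card_image_of_injective (Sym2.map.injective Subtype.val_injective)]

lemma Subgraph.card_edgeSet_eq_of_iso {K : G.Subgraph} (e : K.coe ≃g F) :
    Nat.card K.edgeSet = Nat.card F.edgeSet :=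
  K.card_edgeSet_coe.symm.trans (Nat.card_congr e.mapEdgeSet)

lemma card_edgeSet_notMem_of_iso [Finite α] {K : G.Subgraph} (e : K.coe ≃g F) :
    Nat.card {f : G.edgeSet // (f : Sym2 α) ∉ K.edgeSet} =
      Nat.card G.edgeSet - Nat.card F.edgeSet := by
  classical
  have := Fintype.ofFinite G.edgeSet
  rw [← K.card_edgeSet_eq_of_iso e,
    ← Nat.card_congr (Equiv.subtypeSubtypeEquivSubtype fun h => K.edgeSet_subset h)]
  simp only [Nat.card_eq_fintype_card, Fintype.card_subtype_compl]

lemma sum_subCount_deleteEdges [Finite α] [Fintype G.edgeSet] (F : SimpleGraph γ) :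
    ∑ e : G.edgeSet, subCount F (G.deleteEdges {(e : Sym2 α)}) =
      (Nat.card G.edgeSet - Nat.card F.edgeSet) * subCount F G := by
  classical
  have := Fintype.ofFinite (IsoSubgraphs F G)
  let avoids (e : G.edgeSet) (K : IsoSubgraphs F G) : Prop := (e : Sym2 α) ∉ K.1.edgeSet
  have card_filter {ι : Type _} [Fintype ι] (p : ι → Prop) [DecidablePred p] :
      #{x | p x} = Nat.card {x // p x} := by
    rw [Nat.card_eq_fintype_card, Fintype.card_subtype]
  calc ∑ e : G.edgeSet, subCount F (G.deleteEdges {(e : Sym2 α)})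
      = ∑ e, #(univ.bipartiteAbove avoids e) := by
        refine sum_congr rfl fun e _ => ?_
        rw [bipartiteAbove, card_filter, subCount_deleteEdges]
        simp only [Set.disjoint_singleton_right, avoids]
    _ = ∑ K, #(univ.bipartiteBelow avoids K) :=
        sum_card_bipartiteAbove_eq_sum_card_bipartiteBelow _
    _ = ∑ _K : IsoSubgraphs F G, (Nat.card G.edgeSet - Nat.card F.edgeSet) := by
        refine sum_congr rfl fun K _ => ?_
        rw [bipartiteBelow, card_filter, card_edgeSet_notMem_of_iso K.2.some]
    _ = (Nat.card G.edgeSet - Nat.card F.edgeSet) * subCount F G := by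
        rw [sum_const, card_univ, ← Nat.card_eq_fintype_card, smul_eq_mul, mul_comm, subCount]

end SimpleGraph

theorem stmt8_general {V V' W : Type*} [Fintype V]
    (G : SimpleGraph V) (H : SimpleGraph V') (tau : G.edgeSet ≃ H.edgeSet)
    (hdeck : ∀ e : G.edgeSet,
      Nonempty (G.deleteEdges {(e : Sym2 V)} ≃g H.deleteEdges {((tau e : H.edgeSet) : Sym2 V')}))
    (F : SimpleGraph W) (hF : Nat.card F.edgeSet < Nat.card G.edgeSet) :
    subCount F G = subCount F H := by
  classical
  obtain ⟨e₀⟩ : Nonempty G.edgeSet := (Nat.card_pos_iff.mp (by omega)).1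
  have : Finite V' := .of_equiv V (hdeck e₀).some.toEquiv
  have := Fintype.ofFinite H.edgeSet
  have hsum : ∑ e : G.edgeSet, subCount F (G.deleteEdges {(e : Sym2 V)}) =
      ∑ f : H.edgeSet, subCount F (H.deleteEdges {(f : Sym2 V')}) :=
    Fintype.sum_equiv tau _ _ fun e => subCount_congr_right (hdeck e).some F
  rw [sum_subCount_deleteEdges, sum_subCount_deleteEdges, ← Nat.card_congr tau] at hsum
  exact Nat.eq_of_mul_eq_mul_left (by omega) hsum

/-- Kelly's Lemma, edge version: if `G` and `H` have a common
edge deck via a bijection `τ` of edge sets, then `s(F, G) = s(F, H)` for every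
`F` with fewer edges than `G`. -/
theorem stmt8 {V V' W : Type*} [Fintype V] [Fintype V'] [Fintype W]
    (G : SimpleGraph V) (H : SimpleGraph V') (tau : G.edgeSet ≃ H.edgeSet)
    (hdeck : ∀ e : G.edgeSet,
      Nonempty (G.deleteEdges {(e : Sym2 V)} ≃g H.deleteEdges {((tau e : H.edgeSet) : Sym2 V')}))
    (F : SimpleGraph W) (hF : Nat.card F.edgeSet < Nat.card G.edgeSet) :
    subCount F G = subCount F H :=
  stmt8_general G H tau hdeck F hF
end

section
/- A connected graph G with at least one edge is radius-minimal (i.e., r(G − e) > r(G) for every edge e with G − e connected, and G − e is disconnected counts as having larger radius) if and only if G is a tree. -/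
/-!
Every edge of a tree is a bridge, so deleting it disconnects the graph and makes the radius
infinite, while a finite connected graph has finite radius.

Conversely, suppose `G` is connected but not a tree, and let `v` be a central vertex. Joining each
`w ≠ v` to a neighbour one step closer to `v` gives `|V| - 1` distinct edges, whereas `G` has at
least `|V|` edges. Deleting an edge outside this breadth-first tree keeps every `w ≠ v` adjacent to
its chosen neighbour, so no distance from `v` grows; the eccentricity of `v`, and with it the
radius, does not increase.
-/

open SimpleGraph Finset

lemma eradius_eq_radius {V : Type*} (G : SimpleGraph V) : eradius G = G.radius := rfl

namespace SimpleGraph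

variable {V : Type*} {G H : SimpleGraph V} {v w : V}

lemma Connected.exists_adj_dist_add_one_eq (hG : G.Connected) (hw : w ≠ v) :
    ∃ p, G.Adj p w ∧ G.dist v p + 1 = G.dist v w := by
  obtain ⟨q, hq⟩ := hG.exists_walk_length_eq_dist w v
  cases q with
  | nil => exact absurd rfl hw
  | @cons _ p _ hwp q =>
    obtain ⟨r, hr⟩ := hG.exists_walk_length_eq_dist v p
    have hvp : G.dist v p ≤ q.length := by simpa [dist_comm] using dist_le q.reverse
    have hvw : G.dist v w ≤ G.dist v p + 1 := by simpa [hr] using dist_le (r.concat hwp.symm)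
    rw [dist_comm, Walk.length_cons] at hq
    exact ⟨p, hwp.symm, by omega⟩

lemma edist_le_dist_of_forall_exists_adj
    (h : ∀ w ≠ v, ∃ p, H.Adj p w ∧ G.dist v p + 1 = G.dist v w) (w : V) :
    H.edist v w ≤ G.dist v w := by
  induction hn : G.dist v w using Nat.strong_induction_on generalizing w with
  | _ n ih =>
    obtain rfl | hwv := eq_or_ne w v
    · simp
    obtain ⟨p, hpw, hp⟩ := h w hwv
    calc H.edist v w ≤ H.edist v p + H.edist p w := SimpleGraph.edist_triangle
      _ ≤ G.dist v p + 1 := add_le_add (ih _ (by omega) p rfl) (edist_eq_one_iff_adj.mpr hpw).le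
      _ = n := by rw [← hn, ← hp]; push_cast; rfl

lemma Connected.card_le_card_edgeSet_of_not_isTree [Finite V] (hG : G.Connected)
    (hT : ¬ G.IsTree) : Nat.card V ≤ Nat.card G.edgeSet := by
  have hne : Nat.card G.edgeSet + 1 ≠ Nat.card V :=
    fun h ↦ hT (isTree_iff_connected_and_card.mpr ⟨hG, h⟩)
  have := hG.card_vert_le_card_edgeSet_add_one
  omega

lemma Connected.exists_edge_forall_edist_deleteEdges_le [Finite V] (hG : G.Connected)
    (hT : ¬ G.IsTree) (v : V) :
    ∃ e ∈ G.edgeSet, ∀ w, (G.deleteEdges {e}).edist v w ≤ G.edist v w := by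
  choose par hadj hdist using fun w : {w // w ≠ v} ↦ hG.exists_adj_dist_add_one_eq w.2
  let parentEdge (w : {w // w ≠ v}) : G.edgeSet := ⟨s(par w, w), hadj w⟩
  have hinj : parentEdge.Injective := by
    intro a b hab
    rcases Sym2.eq_iff.mp (congrArg Subtype.val hab) with ⟨-, h⟩ | ⟨h₁, h₂⟩
    · exact Subtype.ext h
    · have ha := hdist a
      have hb := hdist b
      rw [h₁] at ha
      rw [← h₂] at hb
      omega
  have hcard : Nat.card {w // w ≠ v} < Nat.card G.edgeSet := by
    classical
    have := Fintype.ofFinite V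
    have := hG.nonempty
    have hV₀ : 0 < Nat.card V := Nat.card_pos
    have hV := hG.card_le_card_edgeSet_of_not_isTree hT
    have hsub : Nat.card {w // w ≠ v} = Nat.card V - 1 := by
      simp only [Nat.card_eq_fintype_card, Fintype.card_subtype_compl, Fintype.card_subtype_eq]
    omega
  obtain ⟨⟨e, he⟩, hnot⟩ : ∃ e, e ∉ Set.range parentEdge := by
    by_contra! h
    exact hcard.not_ge (Nat.card_le_card_of_surjective _ fun e ↦ h e)
  refine ⟨e, he, fun w ↦ ?_⟩
  rw [← (hG v w).coe_dist_eq_edist]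
  refine edist_le_dist_of_forall_exists_adj (fun w hw ↦ ⟨par ⟨w, hw⟩, ?_, hdist ⟨w, hw⟩⟩) w
  refine deleteEdges_adj.mpr ⟨hadj ⟨w, hw⟩, fun h ↦ hnot ⟨⟨w, hw⟩, ?_⟩⟩
  exact Subtype.ext (Set.mem_singleton_iff.mp h)

lemma IsAcyclic.not_connected_deleteEdges (hG : G.IsAcyclic) {e : Sym2 V} (he : e ∈ G.edgeSet) :
    ¬ (G.deleteEdges {e}).Connected := by
  induction e using Sym2.ind with
  | _ x y => exact fun h ↦ isBridge_iff.mp (isAcyclic_iff_forall_isBridge.mp hG he) (h x y)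

end SimpleGraph

theorem stmt10_general {V : Type*} [Fintype V] (G : SimpleGraph V) (hG : G.Connected) :
    (∀ e ∈ G.edgeSet, eradius G < eradius (G.deleteEdges {e})) ↔ G.IsTree := by
  have := hG.nonempty
  simp only [eradius_eq_radius]
  constructor
  · intro h
    by_contra hT
    obtain ⟨v, hv⟩ := G.exists_eccent_eq_radius
    obtain ⟨e, he, hle⟩ := hG.exists_edge_forall_edist_deleteEdges_le hT v
    refine (h e he).not_ge ?_
    calc (G.deleteEdges {e}).radius ≤ (G.deleteEdges {e}).eccent v := radius_le_eccent
      _ ≤ G.eccent v := (eccent_le_iff _ _).mpr fun w ↦ (hle w).trans edist_le_eccent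
      _ = G.radius := hv
  · intro hT e he
    rw [radius_eq_top_of_not_connected (hT.isAcyclic.not_connected_deleteEdges he)]
    exact (radius_ne_top_iff.mpr hG).lt_top

/-- a connected graph with at least one edge is radius-minimal
iff it is a tree. (Radius is valued in `ℕ∞`, so deleting a bridge makes the
radius `⊤`, which strictly exceeds the finite radius of `G`.) -/
theorem stmt10 {V : Type*} [Fintype V] (G : SimpleGraph V) (hG : G.Connected)
    (hE : G.edgeSet.Nonempty) :
    (∀ e ∈ G.edgeSet, eradius G < eradius (G.deleteEdges {e})) ↔ G.IsTree :=
  stmt10_general G hG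
end

section
/- There exists a graph G with two vertices u, v such that G − u ≅ G − v but no automorphism of G maps u to v (i.e., pseudo-similar vertices exist). Moreover, for such a G one can have a rooted graph F^x with s(F^x, G^u) ≠ s(F^x, G^v). -/
open SimpleGraph Finset

/-! In the Godsil–Kocay graph on `Fin 8`, the vertices `2` and `3` have isomorphic vertex-deleted
subgraphs, witnessed by a permutation of `Fin 8` sending `2` to `3`. But `2` is the pendant
vertex of a paw (it is adjacent to a triangle not containing it) while `3` is not, so the rooted
paw counts at `2` and `3` differ. These counts are invariant under isomorphism, hence no
automorphism maps `2` to `3`. -/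

namespace SimpleGraph

variable {V V' W : Type*}

theorem rootedCountAt_ne_zero_iff [Finite V] (F : SimpleGraph W) (x : W) (G : SimpleGraph V)
    (v : V) : rootedCountAt F x G v ≠ 0 ↔ ∃ f : Copy F G, f x = v := by
  rw [rootedCountAt, Nat.card_ne_zero, and_iff_left Subtype.finite, nonempty_subtype]
  constructor
  · rintro ⟨H, hv, e, rfl⟩
    exact ⟨H.coeCopy.comp e.symm.toCopy, by simp [Copy.comp_apply, Subgraph.coeCopy]⟩
  · rintro ⟨f, rfl⟩
    exact ⟨f.toSubgraph, _, f.isoToSubgraph.symm, f.isoToSubgraph.symm_apply_apply x⟩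

theorem Iso.rootedCountAt_apply_ne_zero [Finite V] [Finite V'] {F : SimpleGraph W} {x : W}
    {G : SimpleGraph V} {G' : SimpleGraph V'} (g : G ≃g G') {u : V}
    (hu : rootedCountAt F x G u ≠ 0) : rootedCountAt F x G' (g u) ≠ 0 := by
  obtain ⟨f, rfl⟩ := (rootedCountAt_ne_zero_iff F x G u).1 hu
  exact (rootedCountAt_ne_zero_iff F x G' _).2 ⟨g.toCopy.comp f, rfl⟩

def deleteVertIsoOfPerm (G : SimpleGraph V) (σ : Equiv.Perm V) (u : V)
    (hσ : ∀ a b, a ≠ u → b ≠ u → (G.Adj (σ a) (σ b) ↔ G.Adj a b)) :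
    deleteVert G u ≃g deleteVert G (σ u) where
  toEquiv := σ.subtypeEquiv fun _ => σ.injective.ne_iff.symm
  map_rel_iff' {a b} := hσ a b a.2 b.2

def paw : SimpleGraph (Fin 4) := fromEdgeSet {s(0, 1), s(1, 2), s(1, 3), s(2, 3)}

instance : DecidableRel paw.Adj := inferInstanceAs (DecidableRel (fromEdgeSet _).Adj)

theorem rootedCountAt_paw_ne_zero_iff [Finite V] {G : SimpleGraph V} {v : V} :
    rootedCountAt paw 0 G v ≠ 0 ↔
      ∃ a b c, G.Adj v a ∧ G.Adj a b ∧ G.Adj a c ∧ G.Adj b c ∧ v ≠ b ∧ v ≠ c := by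
  rw [rootedCountAt_ne_zero_iff]
  constructor
  · rintro ⟨f, rfl⟩
    have hf (i j : Fin 4) (h : paw.Adj i j) : G.Adj (f i) (f j) := f.toHom.map_adj h
    exact ⟨f 1, f 2, f 3, hf 0 1 (by decide), hf 1 2 (by decide), hf 1 3 (by decide),
      hf 2 3 (by decide), f.injective.ne (by decide), f.injective.ne (by decide)⟩
  · rintro ⟨a, b, c, hva, hab, hac, hbc, hvb, hvc⟩
    have hom (i j : Fin 4) (h : paw.Adj i j) : G.Adj (![v, a, b, c] i) (![v, a, b, c] j) := by
      fin_cases i <;> fin_cases j <;>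
        first
        | exact absurd h (by decide)
        | simp [hva, hab, hac, hbc, hva.symm, hab.symm, hac.symm, hbc.symm]
    have inj : Function.Injective ![v, a, b, c] := by
      intro i j hij
      fin_cases i <;> fin_cases j <;>
        simp_all [hva.ne, hab.ne, hac.ne, hbc.ne, hva.ne.symm, hab.ne.symm, hac.ne.symm,
          hbc.ne.symm, hvb.symm, hvc.symm]
    exact ⟨⟨⟨![v, a, b, c], hom _ _⟩, inj⟩, rfl⟩

def godsilKocay : SimpleGraph (Fin 8) :=
  fromEdgeSet
    {s(0, 3), s(0, 4), s(0, 7), s(1, 2), s(1, 5), s(1, 6), s(2, 4), s(2, 6), s(3, 4), s(3, 5)}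

instance : DecidableRel godsilKocay.Adj := inferInstanceAs (DecidableRel (fromEdgeSet _).Adj)

noncomputable def godsilKocayPerm : Equiv.Perm (Fin 8) :=
  Equiv.ofBijective ![1, 0, 3, 2, 6, 4, 7, 5] (by decide)

theorem godsilKocayPerm_adj_iff :
    ∀ a b, a ≠ 2 → b ≠ 2 →
      (godsilKocay.Adj (godsilKocayPerm a) (godsilKocayPerm b) ↔ godsilKocay.Adj a b) := by
  decide

theorem godsilKocay_rootedCountAt_paw_two : rootedCountAt paw 0 godsilKocay 2 ≠ 0 :=
  rootedCountAt_paw_ne_zero_iff.2 (by decide)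

theorem godsilKocay_rootedCountAt_paw_three : rootedCountAt paw 0 godsilKocay 3 = 0 :=
  not_not.1 fun h => absurd (rootedCountAt_paw_ne_zero_iff.1 h) (by decide)

end SimpleGraph

/-- pseudo-similar vertices exist, and the rooted subgraph counts
at them can differ. -/
theorem stmt16 :
    ∃ (V : Type) (_ : Fintype V) (G : SimpleGraph V) (u v : V),
      Nonempty (deleteVert G u ≃g deleteVert G v) ∧
      (¬ ∃ g : G ≃g G, g u = v) ∧
      ∃ (W : Type) (_ : Fintype W) (F : SimpleGraph W) (x : W),
        rootedCountAt F x G u ≠ rootedCountAt F x G v := by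
  refine ⟨Fin 8, inferInstance, godsilKocay, 2, 3,
    ⟨deleteVertIsoOfPerm godsilKocay godsilKocayPerm 2 godsilKocayPerm_adj_iff⟩, ?_,
    Fin 4, inferInstance, paw, 0, ?_⟩
  · rintro ⟨g, hg⟩
    exact g.rootedCountAt_apply_ne_zero godsilKocay_rootedCountAt_paw_two
      (hg ▸ godsilKocay_rootedCountAt_paw_three)
  · rw [godsilKocay_rootedCountAt_paw_three]
    exact godsilKocay_rootedCountAt_paw_two
end
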